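/- Let λ be a real number with λ < −1 or λ > 1/3. Then the characteristic polynomial r_λ satisfies the root condition: every complex root z of r_λ has |z| ≤ 1, the only root of modulus 1 is z = 1, and z = 1 is a simple root of r_λ. -/

import Mathlib

/-!
Clearing the denominator, `4λ · r_λ(ρ) = (ρ - 1)(4λρ² + (λ - 3)ρ + (1 + λ))`. The
quadratic factor `aρ² + bρ + c` meets the Jury conditions `|c| < |a|`, `|b| < |a + c|`
exactly when `λ < -1` or `λ > 1/3`, and these keep its roots in the open unit disc: a
non-real root has `|z|² = c / a`, while a real root outside `(-1, 1)` contradicts the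
signs of the quadratic at `±1`. Finally `r_λ'(1) = (3λ - 1) / (2λ) ≠ 0`.
-/

/-- The ZeroSNet characteristic polynomial over ℂ (real parameter λ):
`r_λ(ρ) = ρ³ − ((3λ+3)/(4λ))ρ² + (1/λ)ρ − (1+λ)/(4λ)`. -/
noncomputable def zerosCharPoly (l : ℝ) (ρ : ℂ) : ℂ :=
  ρ ^ 3 - ((3 * (l : ℂ) + 3) / (4 * (l : ℂ))) * ρ ^ 2 + (1 / (l : ℂ)) * ρ
    - (1 + (l : ℂ)) / (4 * (l : ℂ))

lemma abs_lt_one_of_quadratic_eq_zero {a b c x : ℝ} (ha : 0 < a) (hc : |c| < a)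
    (hb : |b| < a + c) (hx : a * x ^ 2 + b * x + c = 0) : |x| < 1 := by
  rw [abs_lt] at hb hc ⊢
  constructor
  · by_contra! h
    have : 0 ≤ (x + 1) * (a * x + c) :=
      mul_nonneg_of_nonpos_of_nonpos (by linarith) (by nlinarith)
    nlinarith
  · by_contra! h
    have : 0 ≤ (x - 1) * (a * x - c) := mul_nonneg (by linarith) (by nlinarith)
    nlinarith

lemma mul_normSq_eq_of_quadratic_eq_zero {a b c : ℝ} {z : ℂ} (hz : z.im ≠ 0)
    (h : (a : ℂ) * z ^ 2 + b * z + c = 0) : a * Complex.normSq z = c := by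
  have hre := congrArg Complex.re h
  have him := congrArg Complex.im h
  simp only [Complex.add_re, Complex.add_im, Complex.mul_re, Complex.mul_im, Complex.ofReal_re,
    Complex.ofReal_im, sq, Complex.zero_re, Complex.zero_im, zero_mul, sub_zero, add_zero]
    at hre him
  have hvertex : 2 * a * z.re + b = 0 :=
    (mul_eq_zero.mp (by linear_combination him : z.im * (2 * a * z.re + b) = 0)).resolve_left hz
  rw [Complex.normSq_apply]
  linear_combination -hre + z.re * hvertex

lemma norm_lt_one_of_quadratic_eq_zero {a b c : ℝ} (hc : |c| < |a|) (hb : |b| < |a + c|)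
    {z : ℂ} (hz : (a : ℂ) * z ^ 2 + b * z + c = 0) : ‖z‖ < 1 := by
  wlog ha : 0 < a generalizing a b c
  · have ha0 : a ≠ 0 := abs_pos.mp ((abs_nonneg c).trans_lt hc)
    refine this (a := -a) (b := -b) (c := -c) (by rwa [abs_neg, abs_neg])
      (by rwa [← neg_add, abs_neg, abs_neg]) (by push_cast; linear_combination -hz) ?_
    exact neg_pos.mpr (lt_of_le_of_ne (not_lt.mp ha) ha0)
  rw [abs_of_pos ha] at hc
  have hac : 0 < a + c := by linarith [neg_abs_le c]
  rw [abs_of_pos hac] at hb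
  by_cases him : z.im = 0
  · have hz_re : z = z.re := Complex.ext rfl him
    rw [hz_re, Complex.norm_real, Real.norm_eq_abs]
    rw [hz_re] at hz
    exact abs_lt_one_of_quadratic_eq_zero ha hc hb (by exact_mod_cast hz)
  · have hnormSq : Complex.normSq z < 1 := by
      have := mul_normSq_eq_of_quadratic_eq_zero him hz
      nlinarith [le_abs_self c]
    exact (sq_lt_one_iff₀ (norm_nonneg z)).mp (by rwa [Complex.sq_norm])

lemma four_mul_mul_zerosCharPoly {l : ℝ} (hl : l ≠ 0) (ρ : ℂ) :
    4 * l * zerosCharPoly l ρ =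
      (ρ - 1) * (((4 * l : ℝ) : ℂ) * ρ ^ 2 + (l - 3 : ℝ) * ρ + (1 + l : ℝ)) := by
  have hl' : (l : ℂ) ≠ 0 := Complex.ofReal_ne_zero.mpr hl
  unfold zerosCharPoly
  push_cast
  field_simp
  ring

lemma zerosCharPoly_one {l : ℝ} (hl : l ≠ 0) : zerosCharPoly l 1 = 0 := by
  have hl' : (l : ℂ) ≠ 0 := Complex.ofReal_ne_zero.mpr hl
  unfold zerosCharPoly
  field_simp
  ring

lemma hasDerivAt_zerosCharPoly (l : ℝ) (ρ : ℂ) :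
    HasDerivAt (zerosCharPoly l)
      (3 * ρ ^ 2 - (3 * l + 3) / (4 * l) * (2 * ρ) + 1 / l) ρ := by
  have h3 := hasDerivAt_pow 3 ρ
  have h2 := (hasDerivAt_pow 2 ρ).const_mul ((3 * (l : ℂ) + 3) / (4 * l))
  have h1 := (hasDerivAt_id' ρ).const_mul (1 / (l : ℂ))
  exact (((h3.sub h2).add h1).sub_const ((1 + (l : ℂ)) / (4 * l))).congr_deriv (by norm_num)

lemma deriv_zerosCharPoly_one {l : ℝ} (hl : l ≠ 0) :
    deriv (zerosCharPoly l) 1 = (3 * l - 1) / (2 * l) := by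
  have hl' : (l : ℂ) ≠ 0 := Complex.ofReal_ne_zero.mpr hl
  rw [(hasDerivAt_zerosCharPoly l 1).deriv]
  field_simp
  ring

lemma abs_lt_abs_of_zeroStable {l : ℝ} (hl : l < -1 ∨ 1 / 3 < l) :
    |1 + l| < |4 * l| ∧ |l - 3| < |4 * l + (1 + l)| := by
  simp only [← sq_lt_sq]
  rcases hl with hl | hl <;> constructor <;> nlinarith

/-- For λ in the zero-stability region (`λ < −1` or `λ > 1/3`), the ZeroSNet characteristic
polynomial `r_λ` satisfies the root condition: every complex root has modulus at most 1,
the only root of modulus 1 is `1`, and `1` is a simple root (the derivative of `r_λ` does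
not vanish there). -/
theorem zerosnet_root_condition (l : ℝ) (hl : l < -1 ∨ 1 / 3 < l) :
    (∀ z : ℂ, zerosCharPoly l z = 0 → ‖z‖ ≤ 1) ∧
    (∀ z : ℂ, zerosCharPoly l z = 0 → ‖z‖ = 1 → z = 1) ∧
    zerosCharPoly l 1 = 0 ∧ deriv (zerosCharPoly l) 1 ≠ 0 := by
  have hl0 : l ≠ 0 := by rintro rfl; norm_num at hl
  have hl3 : 3 * l - 1 ≠ 0 := by rcases hl with hl | hl <;> linarith
  have hroot (z : ℂ) (hz : zerosCharPoly l z = 0) : z = 1 ∨ ‖z‖ < 1 := by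
    have hfac := four_mul_mul_zerosCharPoly hl0 z
    rw [hz, mul_zero, eq_comm, mul_eq_zero, sub_eq_zero] at hfac
    obtain ⟨hc, hb⟩ := abs_lt_abs_of_zeroStable hl
    exact hfac.imp_right (norm_lt_one_of_quadratic_eq_zero hc hb)
  refine ⟨fun z hz => ?_, fun z hz hz1 => ?_, zerosCharPoly_one hl0, ?_⟩
  · rcases hroot z hz with rfl | h
    · simp
    · exact h.le
  · exact (hroot z hz).resolve_right hz1.not_lt
  · rw [deriv_zerosCharPoly_one hl0]
    exact div_ne_zero (by exact_mod_cast hl3) (by exact_mod_cast mul_ne_zero two_ne_zero hl0)
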